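/- Let v : Finset N → ℝ be a TU coalitional game on a finite nonempty player set N. For every initial partition P₀ of N, there exists a finite sequence P₀, P₁, …, P_m of partitions of N, each obtained from the previous one by an applicable merge rule or an applicable split rule, such that no merge rule and no split rule is applicable to the final partition P_m. -/

import Mathlib

/-!
Every applicable merge or split strictly increases the total value `∑_{S ∈ P} v S` of the
partition and yields a partition again. Since there are only finitely many partitions, the
total value cannot increase forever, so repeatedly applying any applicable rule terminates,
and it can only stop at a partition to which no rule applies.
-/

variable {N : Type*} [Fintype N] [DecidableEq N]

/-- `P` is a partition of the player set `N`: a finite collection of pairwise disjoint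
nonempty coalitions whose union is `N`. -/
def IsPartition (P : Finset (Finset N)) : Prop :=
  (∀ S ∈ P, S.Nonempty) ∧
  (P : Set (Finset N)).PairwiseDisjoint id ∧
  P.sup id = Finset.univ

/-- The merge rule: replace coalitions `S₁, …, S_k ∈ P` (`k ≥ 2`) by their union,
applicable when `∑ⱼ v(Sⱼ) < v(⋃ⱼ Sⱼ)`. -/
def MergeStep (v : Finset N → ℝ) (P P' : Finset (Finset N)) : Prop :=
  ∃ F : Finset (Finset N), F ⊆ P ∧ 2 ≤ F.card ∧
    (∑ S ∈ F, v S) < v (F.sup id) ∧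
    P' = (P \ F) ∪ {F.sup id}

/-- The split rule: replace a coalition `⋃ⱼ Sⱼ ∈ P` by pairwise disjoint nonempty
coalitions `S₁, …, S_k` (`k ≥ 2`), applicable when `∑ⱼ v(Sⱼ) > v(⋃ⱼ Sⱼ)`. -/
def SplitStep (v : Finset N → ℝ) (P P' : Finset (Finset N)) : Prop :=
  ∃ U ∈ P, ∃ F : Finset (Finset N), 2 ≤ F.card ∧
    (∀ S ∈ F, S.Nonempty) ∧
    (F : Set (Finset N)).PairwiseDisjoint id ∧
    F.sup id = U ∧
    v U < ∑ S ∈ F, v S ∧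
    P' = (P \ {U}) ∪ F

theorem WellFounded.exists_chain_to_terminal {α : Type*} {r : α → α → Prop}
    (hr : WellFounded (flip r)) (a : α) :
    ∃ (m : ℕ) (f : ℕ → α), f 0 = a ∧ (∀ t < m, r (f t) (f (t + 1))) ∧ ∀ b, ¬ r (f m) b := by
  induction a using hr.induction with
  | _ a ih =>
    by_cases hstep : ∃ b, r a b
    · obtain ⟨b, hab⟩ := hstep
      obtain ⟨m, f, hf0, hchain, hterm⟩ := ih b hab
      refine ⟨m + 1, fun | 0 => a | t + 1 => f t, rfl, ?_, hterm⟩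
      rintro (_ | t) ht
      · show r a (f 0)
        rwa [hf0]
      · exact hchain t (by omega)
    · exact ⟨0, fun _ => a, rfl, by simp, not_exists.mp hstep⟩

section Replace

variable {P F G : Finset (Finset N)}

theorem IsPartition.disjoint_sup_of_mem_sdiff (hP : IsPartition P) (hF : F ⊆ P) {S : Finset N}
    (hS : S ∈ P \ F) : Disjoint S (F.sup id) := by
  obtain ⟨hSP, hSF⟩ := Finset.mem_sdiff.mp hS
  exact Finset.disjoint_sup_right.mpr fun T hT ↦ hP.2.1 hSP (hF hT) fun h ↦ hSF (h ▸ hT)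

theorem IsPartition.sup_nonempty (hP : IsPartition P) (hF : F ⊆ P) (hFne : F.Nonempty) :
    (F.sup id).Nonempty := by
  obtain ⟨T, hT⟩ := hFne
  exact (hP.1 T (hF hT)).mono (Finset.le_sup (f := id) hT)

theorem IsPartition.disjoint_sdiff_of_sup_eq (hP : IsPartition P) (hF : F ⊆ P)
    (hGne : ∀ S ∈ G, S.Nonempty) (hsup : G.sup id = F.sup id) : Disjoint (P \ F) G := by
  rw [Finset.disjoint_left]
  intro S hS hSG
  have hSle : S ≤ F.sup id := hsup ▸ Finset.le_sup (f := id) hSG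
  exact (hGne S hSG).ne_empty ((hP.disjoint_sup_of_mem_sdiff hF hS).eq_bot_of_le hSle)

/-- Both rules are instances: a merge takes `G = {⋃ F}`, a split takes `F = {U}`. -/
theorem IsPartition.sdiff_union (hP : IsPartition P) (hF : F ⊆ P) (hGne : ∀ S ∈ G, S.Nonempty)
    (hGdisj : (G : Set (Finset N)).PairwiseDisjoint id) (hsup : G.sup id = F.sup id) :
    IsPartition (P \ F ∪ G) := by
  refine ⟨?_, ?_, ?_⟩
  · intro S hS
    rcases Finset.mem_union.mp hS with hS | hS
    · exact hP.1 S (Finset.mem_sdiff.mp hS).1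
    · exact hGne S hS
  · rw [Finset.coe_union]
    refine (hP.2.1.subset (by simp)).union hGdisj fun S hS T hT _ ↦ ?_
    exact (hP.disjoint_sup_of_mem_sdiff hF hS).mono_right (hsup ▸ Finset.le_sup (f := id) hT)
  · rw [Finset.sup_union, hsup, ← Finset.sup_union, Finset.sdiff_union_of_subset hF]
    exact hP.2.2

theorem IsPartition.sum_sdiff_union (hP : IsPartition P) (hF : F ⊆ P)
    (hGne : ∀ S ∈ G, S.Nonempty) (hsup : G.sup id = F.sup id) (v : Finset N → ℝ) :
    ∑ S ∈ P \ F ∪ G, v S = ∑ S ∈ P, v S - ∑ S ∈ F, v S + ∑ S ∈ G, v S := by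
  rw [Finset.sum_union (hP.disjoint_sdiff_of_sup_eq hF hGne hsup), ← Finset.sum_sdiff hF]
  ring

end Replace

def MergeSplitStep (v : Finset N → ℝ) (P Q : Finset (Finset N)) : Prop :=
  IsPartition P ∧ (MergeStep v P Q ∨ SplitStep v P Q)

section Steps

variable {v : Finset N → ℝ} {P Q : Finset (Finset N)}

theorem MergeStep.isPartition (hP : IsPartition P) (h : MergeStep v P Q) : IsPartition Q := by
  obtain ⟨F, hF, hcard, -, rfl⟩ := h
  have hFne : F.Nonempty := Finset.card_pos.mp (by omega)
  refine hP.sdiff_union hF ?_ (by simp) Finset.sup_singleton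
  simpa using hP.sup_nonempty hF hFne

theorem MergeStep.sum_lt (hP : IsPartition P) (h : MergeStep v P Q) :
    ∑ S ∈ P, v S < ∑ S ∈ Q, v S := by
  obtain ⟨F, hF, hcard, hlt, rfl⟩ := h
  have hFne : F.Nonempty := Finset.card_pos.mp (by omega)
  have hGne : ∀ S ∈ ({F.sup id} : Finset (Finset N)), S.Nonempty := by
    simpa using hP.sup_nonempty hF hFne
  rw [hP.sum_sdiff_union hF hGne Finset.sup_singleton, Finset.sum_singleton]
  linarith

theorem SplitStep.isPartition (hP : IsPartition P) (h : SplitStep v P Q) : IsPartition Q := by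
  obtain ⟨U, hU, F, -, hFne, hFdisj, hFsup, -, rfl⟩ := h
  exact hP.sdiff_union (Finset.singleton_subset_iff.mpr hU) hFne hFdisj
    (by rw [hFsup, Finset.sup_singleton]; rfl)

theorem SplitStep.sum_lt (hP : IsPartition P) (h : SplitStep v P Q) :
    ∑ S ∈ P, v S < ∑ S ∈ Q, v S := by
  obtain ⟨U, hU, F, -, hFne, -, hFsup, hlt, rfl⟩ := h
  rw [hP.sum_sdiff_union (Finset.singleton_subset_iff.mpr hU) hFne
    (by rw [hFsup, Finset.sup_singleton]; rfl), Finset.sum_singleton]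
  linarith

theorem MergeSplitStep.isPartition_right (h : MergeSplitStep v P Q) : IsPartition Q :=
  h.2.elim (·.isPartition h.1) (·.isPartition h.1)

theorem MergeSplitStep.sum_lt (h : MergeSplitStep v P Q) : ∑ S ∈ P, v S < ∑ S ∈ Q, v S :=
  h.2.elim (·.sum_lt h.1) (·.sum_lt h.1)

end Steps

theorem wellFounded_flip_mergeSplitStep (v : Finset N → ℝ) :
    WellFounded (flip (MergeSplitStep v)) :=
  Subrelation.wf (fun h ↦ h.sum_lt)
    (Finite.wellFounded_of_trans_of_irrefl (InvImage (· > ·) fun P ↦ ∑ S ∈ P, v S))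

theorem merge_split_reaches_terminal_general
    (v : Finset N → ℝ)
    (P₀ : Finset (Finset N)) (hP₀ : IsPartition P₀) :
    ∃ (m : ℕ) (P : ℕ → Finset (Finset N)),
      P 0 = P₀ ∧
      (∀ t ≤ m, IsPartition (P t)) ∧
      (∀ t < m, MergeStep v (P t) (P (t + 1)) ∨ SplitStep v (P t) (P (t + 1))) ∧
      (∀ Q : Finset (Finset N), ¬ MergeStep v (P m) Q ∧ ¬ SplitStep v (P m) Q) := by
  obtain ⟨m, P, hP0, hsteps, hterm⟩ :=
    (wellFounded_flip_mergeSplitStep v).exists_chain_to_terminal P₀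
  have hpart : ∀ t ≤ m, IsPartition (P t) := by
    rintro (_ | t) ht
    · exact hP0 ▸ hP₀
    · exact (hsteps t (by omega)).isPartition_right
  refine ⟨m, P, hP0, hpart, fun t ht ↦ (hsteps t ht).2, fun Q ↦ ?_⟩
  exact not_or.mp fun h ↦ hterm Q ⟨hpart m le_rfl, h⟩

/-- **Reachability of a terminal partition.** For a TU coalitional game `v` on a finite
nonempty player set `N` and any initial partition `P₀` of `N`, there is a finite sequence
`P₀, P₁, …, P_m` of partitions of `N`, each obtained from the previous one by an
applicable merge rule or an applicable split rule, such that no merge rule and no split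
rule is applicable to the final partition `P_m`. -/
theorem merge_split_reaches_terminal [Nonempty N]
    (v : Finset N → ℝ) (hv0 : v ∅ = 0)
    (P₀ : Finset (Finset N)) (hP₀ : IsPartition P₀) :
    ∃ (m : ℕ) (P : ℕ → Finset (Finset N)),
      P 0 = P₀ ∧
      (∀ t ≤ m, IsPartition (P t)) ∧
      (∀ t < m, MergeStep v (P t) (P (t + 1)) ∨ SplitStep v (P t) (P (t + 1))) ∧
      (∀ Q : Finset (Finset N), ¬ MergeStep v (P m) Q ∧ ¬ SplitStep v (P m) Q) :=
  merge_split_reaches_terminal_general v P₀ hP₀
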